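/- arXiv:1105.3245 — 4 statements merged into one kernel-verified Lean document; each statement's English description precedes it below -/
import Mathlib

section
/- Let f : ℝ → ℝ be infinitely differentiable with f(y) = 0 for all y ≥ 0 and f(y) > 0 for all y < 0, and define ζ : ℝ² → ℝ by ζ(y,z) = z²y² + z⁴ + f(y). Then there is no continuously differentiable (C¹) function u : ℝ² → ℝ such that u(y,z)² = ζ(y,z) for all (y,z) ∈ ℝ². In other words, the nonnegative smooth function ζ admits no C¹ square root on ℝ². -/
/-!
Off the closed ray `{z = 0, y ≥ 0}` the function `ζ` is positive, so a continuous square root `u`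
has no zeros on the complement of the ray. That complement is connected (star-shaped about
`(-1, 0)`), hence `u` has constant sign there. On the line `y = 1` this makes
`z ↦ u(1,1) u(1,z)` a nonnegative function vanishing at `0` with `|u(1,z)| = |z| √(1 + z²)`:
it has a corner at `0`, so `u` cannot be differentiable at `(1, 0)`.
-/

open Set Filter Topology

theorem IsPreconnected.mul_pos_of_ne_zero {X : Type*} [TopologicalSpace X] {s : Set X}
    {u : X → ℝ} (hs : IsPreconnected s) (hu : ContinuousOn u s) (hne : ∀ p ∈ s, u p ≠ 0)
    {p q : X} (hp : p ∈ s) (hq : q ∈ s) : 0 < u p * u q := by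
  have hzero : (0 : ℝ) ∉ u '' s := fun ⟨r, hr, hr0⟩ => hne r hr hr0
  rcases (hne p hp).lt_or_gt with hup | hup <;> rcases (hne q hq).lt_or_gt with huq | huq
  · exact mul_pos_of_neg_of_neg hup huq
  · exact absurd (hs.intermediate_value hp hq hu ⟨hup.le, huq.le⟩) hzero
  · exact absurd (hs.intermediate_value hq hp hu ⟨huq.le, hup.le⟩) hzero
  · exact mul_pos hup huq

theorem isPreconnected_setOf_fst_neg_or_snd_ne_zero :
    IsPreconnected {p : ℝ × ℝ | p.1 < 0 ∨ p.2 ≠ 0} := by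
  refine (StarConvex.isPathConnected (a := ((-1 : ℝ), (0 : ℝ))) ?_
    (by simp)).isConnected.isPreconnected
  rintro ⟨y, z⟩ hp a b ha hb hab
  simp only [mem_ofPred_eq, Prod.smul_mk, Prod.mk_add_mk, smul_eq_mul] at hp ⊢
  rcases hb.eq_or_lt with rfl | hb
  · left; linarith
  rcases hp with hy | hz
  · left; nlinarith [mul_neg_of_pos_of_neg hb hy]
  · right; simpa using ⟨hb.ne', hz⟩

theorem not_differentiableAt_of_isLocalMin_of_le_abs_sub {g : ℝ → ℝ} {x c : ℝ}
    (hmin : IsLocalMin g x) (hc : 0 < c) (hgrowth : ∀ᶠ z in 𝓝 x, c * |z - x| ≤ |g z - g x|) :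
    ¬ DifferentiableAt ℝ g x := by
  intro hd
  have hderiv : HasDerivAt g 0 x := hmin.deriv_eq_zero ▸ hd.hasDerivAt
  have hsmall : ∀ᶠ z in 𝓝 x, |g z - g x| ≤ c / 2 * |z - x| := by
    simpa using hderiv.isLittleO.def (half_pos hc)
  obtain ⟨z, ⟨hz_ge, hz_le⟩, hzx⟩ :=
    ((hgrowth.and hsmall).filter_mono nhdsWithin_le_nhds |>.and self_mem_nhdsWithin).exists
      (f := 𝓝[≠] x)
  have : 0 < |z - x| := abs_pos.mpr (sub_ne_zero.mpr hzx)
  nlinarith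

theorem zeta_has_no_C1_sqrt_general (f : ℝ → ℝ)
    (hf0 : ∀ y : ℝ, 0 ≤ y → f y = 0) (hfpos : ∀ y : ℝ, y < 0 → 0 < f y)
    (ζ : ℝ × ℝ → ℝ)
    (hζ : ∀ y z : ℝ, ζ (y, z) = z ^ 2 * y ^ 2 + z ^ 4 + f y) :
    ¬ ∃ u : ℝ × ℝ → ℝ, ContDiff ℝ 1 u ∧ ∀ p : ℝ × ℝ, (u p) ^ 2 = ζ p := by
  rintro ⟨u, hu, hsq⟩
  have hf_nonneg (y : ℝ) : 0 ≤ f y :=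
    (le_or_gt 0 y).elim (fun hy => (hf0 y hy).ge) (fun hy => (hfpos y hy).le)
  have hu_ne : ∀ p ∈ {p : ℝ × ℝ | p.1 < 0 ∨ p.2 ≠ 0}, u p ≠ 0 := by
    rintro ⟨y, z⟩ (hy | hz) hu0 <;> have := hsq (y, z) <;> rw [hζ, hu0] at this
    · nlinarith [hfpos y hy, sq_nonneg (z * y), sq_nonneg (z ^ 2)]
    · nlinarith [hf_nonneg y, sq_nonneg (z * y), pow_pos (sq_pos_of_ne_zero hz) 2]
  have hline (z : ℝ) : u (1, z) ^ 2 = z ^ 2 + z ^ 4 := by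
    rw [hsq, hζ, hf0 1 zero_le_one]; ring
  have hu_zero : u (1, 0) = 0 := by simpa using hline 0
  have hsign (z : ℝ) (hz : z ≠ 0) : 0 < u (1, 1) * u (1, z) :=
    isPreconnected_setOf_fst_neg_or_snd_ne_zero.mul_pos_of_ne_zero hu.continuous.continuousOn
      hu_ne (Or.inr one_ne_zero) (Or.inr hz)
  refine not_differentiableAt_of_isLocalMin_of_le_abs_sub (g := fun z => u (1, 1) * u (1, z))
    (x := 0) (c := |u (1, 1)|) ?_ (abs_pos.mpr (hu_ne _ (Or.inr one_ne_zero))) ?_ ?_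
  · refine Eventually.of_forall fun z => ?_
    rcases eq_or_ne z 0 with rfl | hz
    · rfl
    · simpa [hu_zero] using (hsign z hz).le
  · refine Eventually.of_forall fun z => ?_
    have : |z| ≤ |u (1, z)| := sq_le_sq.mp (by nlinarith [hline z, pow_two_nonneg (z ^ 2)])
    simpa [hu_zero, abs_mul] using mul_le_mul_of_nonneg_left this (abs_nonneg (u (1, 1)))
  · exact ((hu.differentiable one_ne_zero).comp
      ((differentiable_const _).prodMk differentiable_id)).const_mul _ |>.differentiableAt

/-- The paper's example (Section 5): the nonnegative smooth function
`ζ(y,z) = z²y² + z⁴ + f(y)`, where `f` is smooth, vanishes on `[0,∞)` and is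
positive on `(-∞,0)`, admits no C¹ square root on `ℝ²`. -/
theorem zeta_has_no_C1_sqrt (f : ℝ → ℝ) (hf : ContDiff ℝ (⊤ : ℕ∞) f)
    (hf0 : ∀ y : ℝ, 0 ≤ y → f y = 0) (hfpos : ∀ y : ℝ, y < 0 → 0 < f y)
    (ζ : ℝ × ℝ → ℝ)
    (hζ : ∀ y z : ℝ, ζ (y, z) = z ^ 2 * y ^ 2 + z ^ 4 + f y) :
    ¬ ∃ u : ℝ × ℝ → ℝ, ContDiff ℝ 1 u ∧ ∀ p : ℝ × ℝ, (u p) ^ 2 = ζ p :=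
  zeta_has_no_C1_sqrt_general f hf0 hfpos ζ hζ
end

section
/- Let u : ℝ → ℝ be continuous, differentiable at 0, and satisfy u(z)² = z²(1 + z²) for all z ∈ ℝ. Then u(1)·u(−1) < 0, i.e. u takes opposite signs at z = 1 and z = −1. (Consequently, the only differentiable square roots of z²(1+z²) near 0 are u(z) = z·√(1+z²) and u(z) = −z·√(1+z²), both of which change sign at 0.) -/
/-!
Since `u 0 = 0`, the difference quotient `u z / z` tends to `L = u'(0)`, and squaring shows
`L ^ 2 = 1`. Hence `u z * u (-z) / z ^ 2 = -(u z / z) * (u (-z) / (-z)) → -L ^ 2 = -1`, so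
`u z * u (-z) < 0` for small `z > 0`. On `(0, ∞)` the continuous function `z ↦ u z * u (-z)`
never vanishes, because `u` vanishes only at `0`; by the intermediate value theorem it is
therefore negative at `z = 1` as well.
-/

open Filter Topology Set

section NontriviallyNormedField

variable {𝕜 : Type*} [NontriviallyNormedField 𝕜] {u h : 𝕜 → 𝕜} {L : 𝕜}

theorem HasDerivAt.tendsto_div_self (hu : HasDerivAt u L 0) (h0 : u 0 = 0) :
    Tendsto (fun z => u z / z) (𝓝[≠] 0) (𝓝 L) := by
  simpa [h0, div_eq_inv_mul] using hu.tendsto_slope_zero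

theorem HasDerivAt.sq_eq_of_sq_eq_sq_mul (hu : HasDerivAt u L 0)
    (hsq : ∀ z, u z ^ 2 = z ^ 2 * h z) (hh : ContinuousAt h 0) : L ^ 2 = h 0 := by
  have h0 : u 0 = 0 := by simpa using hsq 0
  have hquot : ∀ᶠ z in 𝓝[≠] (0 : 𝕜), h z = (u z / z) ^ 2 := by
    filter_upwards [self_mem_nhdsWithin] with z (hz : z ≠ 0)
    rw [div_pow, hsq, mul_div_cancel_left₀ _ (pow_ne_zero 2 hz)]
  exact tendsto_nhds_unique ((hu.tendsto_div_self h0).pow 2)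
    ((hh.tendsto.mono_left nhdsWithin_le_nhds).congr' hquot)

theorem HasDerivAt.tendsto_mul_comp_neg_div_sq (hu : HasDerivAt u L 0) (h0 : u 0 = 0) :
    Tendsto (fun z => u z * u (-z) / z ^ 2) (𝓝[≠] 0) (𝓝 (-L ^ 2)) := by
  have hu_neg : HasDerivAt (fun z => u (-z)) (-L) 0 := by
    simpa [Function.comp_def] using hu.comp_of_eq 0 (hasDerivAt_neg 0) neg_zero.symm
  have hlim := (hu.tendsto_div_self h0).mul (hu_neg.tendsto_div_self (by simpa using h0))
  rw [mul_neg, ← sq] at hlim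
  exact hlim.congr fun z => by rw [div_mul_div_comm, sq]

end NontriviallyNormedField

theorem HasDerivAt.eventually_mul_comp_neg_neg {u : ℝ → ℝ} {L : ℝ} (hu : HasDerivAt u L 0)
    (h0 : u 0 = 0) (hL : L ≠ 0) : ∀ᶠ z in 𝓝[≠] 0, u z * u (-z) < 0 :=
  ((hu.tendsto_mul_comp_neg_div_sq h0).eventually_lt_const
    (neg_neg_of_pos (sq_pos_of_ne_zero hL))).mono
    fun z hz => neg_of_div_neg_left hz (sq_nonneg z)

theorem IsPreconnected.neg_of_neg {α : Type*} [TopologicalSpace α] {s : Set α}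
    (hs : IsPreconnected s) {f : α → ℝ} (hf : ContinuousOn f s) (hne : ∀ x ∈ s, f x ≠ 0)
    {a b : α} (ha : a ∈ s) (hb : b ∈ s) (hfa : f a < 0) : f b < 0 := by
  by_contra! hfb
  obtain ⟨c, hc, hfc⟩ := hs.intermediate_value ha hb hf ⟨hfa.le, hfb⟩
  exact hne c hc hfc

/-- Any continuous square root of `z²(1+z²)` which is differentiable at `0`
takes opposite signs at `z = 1` and `z = -1`. -/
theorem sqrt_of_z_sq_one_add_z_sq_changes_sign (u : ℝ → ℝ)
    (hcont : Continuous u) (hdiff : DifferentiableAt ℝ u 0)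
    (hsq : ∀ z : ℝ, (u z) ^ 2 = z ^ 2 * (1 + z ^ 2)) :
    u 1 * u (-1) < 0 := by
  have hu0 : u 0 = 0 := by simpa using hsq 0
  have hu_ne : ∀ z ≠ 0, u z ≠ 0 := fun z hz => by
    rw [← pow_ne_zero_iff two_ne_zero, hsq]
    positivity
  have hL_sq : deriv u 0 ^ 2 = 1 := by
    simpa using hdiff.hasDerivAt.sq_eq_of_sq_eq_sq_mul hsq (by fun_prop)
  have hL : deriv u 0 ≠ 0 := fun h => by simp [h] at hL_sq
  obtain ⟨z₀, hz₀, hz₀_pos⟩ := ((hdiff.hasDerivAt.eventually_mul_comp_neg_neg hu0 hL).filter_mono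
    (nhdsGT_le_nhdsNE 0) |>.and self_mem_nhdsWithin).exists
  have hne : ∀ z ∈ Ioi (0 : ℝ), u z * u (-z) ≠ 0 := fun z (hz : 0 < z) =>
    mul_ne_zero (hu_ne z hz.ne') (hu_ne (-z) (neg_ne_zero.2 hz.ne'))
  exact isPreconnected_Ioi.neg_of_neg (by fun_prop) hne hz₀_pos (mem_Ioi.2 one_pos) hz₀
end

section
/- Let f : ℝ → ℝ be infinitely differentiable with f(y) = 0 for all y ≥ 0 and f(y) > 0 for all y < 0, and define ζ : ℝ² → ℝ by ζ(y,z) = z²y² + z⁴ + f(y). If u : ℝ² → ℝ is continuous and satisfies u(y,z)² = ζ(y,z) for all (y,z) ∈ ℝ², then u(1,1)·u(1,−1) > 0, i.e. u has the same (nonzero) sign at the points q = (1,1) and p = (1,−1). -/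
/-- If a continuous real function is nonzero on `uIcc a b`, then its values at
`a` and `b` have the same sign. -/
lemma same_sign_of_nonzero {g : ℝ → ℝ} (hg : Continuous g) (a b : ℝ)
    (hne : ∀ t ∈ Set.uIcc a b, g t ≠ 0) : 0 < g a * g b := by
  rcases lt_trichotomy (g a * g b) 0 with h | h | h
  · exfalso
    have h0 : (0 : ℝ) ∈ Set.uIcc (g a) (g b) := by
      rcases mul_neg_iff.mp h with ⟨ha, hb⟩ | ⟨ha, hb⟩
      · exact Set.mem_uIcc.mpr (Or.inr ⟨le_of_lt hb, le_of_lt ha⟩)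
      · exact Set.mem_uIcc.mpr (Or.inl ⟨le_of_lt ha, le_of_lt hb⟩)
    obtain ⟨t, ht, hgt⟩ := intermediate_value_uIcc hg.continuousOn h0
    exact hne t ht hgt
  · exfalso
    rcases mul_eq_zero.mp h with h' | h'
    · exact hne a Set.left_mem_uIcc h'
    · exact hne b Set.right_mem_uIcc h'
  · exact h

/-- For `ζ(y,z) = z²y² + z⁴ + f(y)` with `f` smooth, vanishing on `[0,∞)` and
positive on `(-∞,0)`: any continuous square root of `ζ` has the same nonzero
sign at the points `q = (1,1)` and `p = (1,-1)`. -/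
theorem continuous_sqrt_same_sign (f : ℝ → ℝ) (hf : ContDiff ℝ (⊤ : ℕ∞) f)
    (hf0 : ∀ y : ℝ, 0 ≤ y → f y = 0) (hfpos : ∀ y : ℝ, y < 0 → 0 < f y)
    (ζ : ℝ × ℝ → ℝ)
    (hζ : ∀ y z : ℝ, ζ (y, z) = z ^ 2 * y ^ 2 + z ^ 4 + f y)
    (u : ℝ × ℝ → ℝ) (hu : Continuous u)
    (hsq : ∀ p : ℝ × ℝ, (u p) ^ 2 = ζ p) :
    0 < u (1, 1) * u (1, -1) := by
  have hfnn : ∀ y : ℝ, 0 ≤ f y := by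
    intro y
    rcases le_or_gt 0 y with h | h
    · exact le_of_eq (hf0 y h).symm
    · exact le_of_lt (hfpos y h)
  have hune : ∀ y z : ℝ, 0 < ζ (y, z) → u (y, z) ≠ 0 := by
    intro y z hpos hzero
    have := hsq (y, z)
    rw [hzero] at this
    simp at this
    linarith
  -- segment 1 : from (1,1) to (-1,1), z = 1
  have h1 : 0 < u (1, 1) * u (-1, 1) := by
    have := same_sign_of_nonzero (g := fun t => u (t, 1))
      (hu.comp (by continuity)) 1 (-1) ?_
    · exact this
    · intro t _
      apply hune
      rw [hζ]
      nlinarith [hfnn t, sq_nonneg t]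
  -- segment 2 : from (-1,1) to (-1,-1), y = -1
  have h2 : 0 < u (-1, 1) * u (-1, -1) := by
    have := same_sign_of_nonzero (g := fun t => u (-1, t))
      (hu.comp (by continuity)) 1 (-1) ?_
    · exact this
    · intro t _
      apply hune
      rw [hζ]
      have := hfpos (-1) (by norm_num)
      nlinarith [sq_nonneg t, sq_nonneg (t^2)]
  -- segment 3 : from (-1,-1) to (1,-1), z = -1
  have h3 : 0 < u (-1, -1) * u (1, -1) := by
    have := same_sign_of_nonzero (g := fun t => u (t, -1))
      (hu.comp (by continuity)) (-1) 1 ?_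
    · exact this
    · intro t _
      apply hune
      rw [hζ]
      nlinarith [hfnn t, sq_nonneg t]
  nlinarith [mul_pos h1 h3, mul_pos (mul_pos h1 h2) h3, sq_nonneg (u (-1,1) * u (-1,-1))]
end

section
/- Let I ⊆ ℝ be an open interval, let V ⊆ ℝ² be open and convex, and let G, H₁, H₂ : I × V → ℝ be smooth functions with G(w,x) > 0 for all (w,x) ∈ I × V. Then the following three conditions hold identically on I × V: (RW1) G·∂_w H_A − H_A·∂_w G = 0 for A = 1,2; (RW2) H₁·∂₂G − H₂·∂₁G + G·(∂₁H₂ − ∂₂H₁) = 0; (RW3) H₁·∂_w H₂ − H₂·∂_w H₁ = 0; if and only if there exists a smooth function ζ : V → ℝ such that H_A(w,x) = G(w,x)·(∂_A ζ)(x) for all (w,x) ∈ I × V and A = 1,2. Here ∂_w denotes the partial derivative along the first coordinate and ∂₁, ∂₂ the partial derivatives along the two coordinates of V. -/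
/-!
Put `F_A = H_A / G`, so that `H_A = G F_A`. The product rule turns (RW1), (RW2), (RW3) into
`G² ∂_w F_A = 0`, `G² (∂₁F₂ - ∂₂F₁) = 0` and `G² (F₁ ∂_w F₂ - F₂ ∂_w F₁) = 0`. As `G > 0`,
staticity says exactly that the 1-form `F₁ dx¹ + F₂ dx²` does not depend on `w` and is closed.
On the convex set `V` the Poincaré lemma makes it `dζ`; conversely `∂_A ζ` is independent of `w`
and `∂₁∂₂ζ = ∂₂∂₁ζ`.
-/

open Filter Topology ContinuousLinearMap

section Poincare

variable {E F : Type*} [NormedAddCommGroup E] [NormedSpace ℝ E]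
  [NormedAddCommGroup F] [NormedSpace ℝ F] [CompleteSpace F]

theorem Convex.exists_contDiffOn_forall_hasFDerivAt_of_fderiv_symmetric {s : Set E}
    {ω : E → E →L[ℝ] F} {n : ℕ∞} (hs : Convex ℝ s) (hso : IsOpen s)
    (hω : ContDiffOn ℝ n ω s) (hn : n ≠ 0)
    (hdω : ∀ a ∈ s, ∀ x y, fderiv ℝ ω a x y = fderiv ℝ ω a y x) :
    ∃ f : E → F, ContDiffOn ℝ ((n : WithTop ℕ∞) + 1) f s ∧ ∀ a ∈ s, HasFDerivAt f (ω a) a := by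
  obtain ⟨f, hf⟩ := hs.exists_forall_hasFDerivAt_of_fderiv_symmetric hso
    (hω.differentiableOn (mod_cast hn)) hdω
  refine ⟨f, ?_, hf⟩
  rw [contDiffOn_succ_iff_fderiv_of_isOpen hso]
  exact ⟨fun a ha => (hf a ha).differentiableAt.differentiableWithinAt, by simp,
    hω.congr fun a ha => (hf a ha).fderiv⟩

end Poincare

section Slices

variable {𝕜 E F M : Type*} [NontriviallyNormedField 𝕜] [NormedAddCommGroup E] [NormedSpace 𝕜 E]
  [NormedAddCommGroup F] [NormedSpace 𝕜 F] [NormedAddCommGroup M] [NormedSpace 𝕜 M]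

theorem DifferentiableAt.hasDerivAt_comp_prodMk_left {φ : 𝕜 × E → F} {w : 𝕜} {x : E}
    (h : DifferentiableAt 𝕜 φ (w, x)) :
    HasDerivAt (fun s => φ (s, x)) (fderiv 𝕜 φ (w, x) (1, 0)) w :=
  h.hasFDerivAt.comp_hasDerivAt w ((hasDerivAt_id w).prodMk (hasDerivAt_const w x))

theorem DifferentiableAt.fderiv_comp_prodMk_right_apply {φ : E × F → M} {w : E} {x : F}
    (h : DifferentiableAt 𝕜 φ (w, x)) (v : F) :
    fderiv 𝕜 (fun y => φ (w, y)) x v = fderiv 𝕜 φ (w, x) (0, v) := by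
  rw [HasFDerivAt.fderiv (f := fun y => φ (w, y))
    (h.hasFDerivAt.comp x (hasFDerivAt_prodMk_right w x))]
  simp

theorem DifferentiableAt.fderiv_comp_snd_apply {k : F → M} {p : E × F}
    (h : DifferentiableAt 𝕜 k p.2) (v : E × F) :
    fderiv 𝕜 (fun q => k q.2) p v = fderiv 𝕜 k p.2 v.2 := by
  rw [HasFDerivAt.fderiv (f := fun q : E × F => k q.2) (h.hasFDerivAt.comp p hasFDerivAt_snd)]
  simp

end Slices

theorem ContDiffAt.fderiv_fderiv_apply_comm {E F : Type*} [NormedAddCommGroup E]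
    [NormedSpace ℝ E] [NormedAddCommGroup F] [NormedSpace ℝ F] {ζ : E → F} {x : E}
    (hζ : ContDiffAt ℝ 2 ζ x) (u v : E) :
    fderiv ℝ (fun y => fderiv ℝ ζ y u) x v = fderiv ℝ (fun y => fderiv ℝ ζ y v) x u := by
  have hd : DifferentiableAt ℝ (fderiv ℝ ζ) x :=
    (hζ.fderiv_right (m := 1) (by norm_num)).differentiableAt one_ne_zero
  rw [fderiv_clm_apply hd (differentiableAt_const u),
    fderiv_clm_apply hd (differentiableAt_const v)]
  simpa using (hζ.isSymmSndFDerivAt (by simp)) v u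

theorem IsOpen.apply_prodMk_eq_of_fderiv_apply_one_zero_eq_zero {𝕜 E F : Type*} [RCLike 𝕜]
    [NormedAddCommGroup E] [NormedSpace 𝕜 E] [NormedAddCommGroup F] [NormedSpace 𝕜 F]
    {I : Set 𝕜} (hIo : IsOpen I) (hIc : IsPreconnected I) {φ : 𝕜 × E → F} {x : E}
    (hφ : ∀ s ∈ I, DifferentiableAt 𝕜 φ (s, x)) (h : ∀ s ∈ I, fderiv 𝕜 φ (s, x) (1, 0) = 0)
    {w w₀ : 𝕜} (hw : w ∈ I) (hw₀ : w₀ ∈ I) : φ (w, x) = φ (w₀, x) :=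
  hIo.is_const_of_deriv_eq_zero hIc
    (fun s hs => (hφ s hs).hasDerivAt_comp_prodMk_left.differentiableAt.differentiableWithinAt)
    (fun s hs => by simp only [(hφ s hs).hasDerivAt_comp_prodMk_left.deriv, h s hs, Pi.zero_apply])
    hw hw₀

/-- (RW1) for `A = 1, 2`, (RW2) and (RW3) at `p = (w, x¹, x²)`; the directions `(1, 0, 0)`,
`(0, 1, 0)`, `(0, 0, 1)` give `∂_w`, `∂₁`, `∂₂`. -/
def StaticityConditions (G H₁ H₂ : ℝ × (ℝ × ℝ) → ℝ) (p : ℝ × (ℝ × ℝ)) : Prop :=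
  (G p * fderiv ℝ H₁ p (1, 0, 0) - H₁ p * fderiv ℝ G p (1, 0, 0) = 0) ∧
  (G p * fderiv ℝ H₂ p (1, 0, 0) - H₂ p * fderiv ℝ G p (1, 0, 0) = 0) ∧
  (H₁ p * fderiv ℝ G p (0, 0, 1) - H₂ p * fderiv ℝ G p (0, 1, 0) +
    G p * (fderiv ℝ H₂ p (0, 1, 0) - fderiv ℝ H₁ p (0, 0, 1)) = 0) ∧
  (H₁ p * fderiv ℝ H₂ p (1, 0, 0) - H₂ p * fderiv ℝ H₁ p (1, 0, 0) = 0)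

theorem staticityConditions_iff_of_eventuallyEq_mul {G H₁ H₂ F₁ F₂ : ℝ × (ℝ × ℝ) → ℝ}
    {p : ℝ × (ℝ × ℝ)} (hG : DifferentiableAt ℝ G p)
    (hF₁ : DifferentiableAt ℝ F₁ p) (hF₂ : DifferentiableAt ℝ F₂ p)
    (hH₁ : H₁ =ᶠ[𝓝 p] fun q => G q * F₁ q) (hH₂ : H₂ =ᶠ[𝓝 p] fun q => G q * F₂ q) :
    StaticityConditions G H₁ H₂ p ↔
      G p ^ 2 * fderiv ℝ F₁ p (1, 0, 0) = 0 ∧ G p ^ 2 * fderiv ℝ F₂ p (1, 0, 0) = 0 ∧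
        G p ^ 2 * (fderiv ℝ F₂ p (0, 1, 0) - fderiv ℝ F₁ p (0, 0, 1)) = 0 ∧
        G p ^ 2 * (F₁ p * fderiv ℝ F₂ p (1, 0, 0) - F₂ p * fderiv ℝ F₁ p (1, 0, 0)) = 0 := by
  simp only [StaticityConditions, hH₁.eq_of_nhds, hH₂.eq_of_nhds, hH₁.fderiv_eq, hH₂.fderiv_eq,
    fderiv_fun_mul hG hF₁, fderiv_fun_mul hG hF₂, add_apply, smul_apply, smul_eq_mul]
  refine and_congr ?_ (and_congr ?_ (and_congr ?_ ?_)) <;>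
    exact iff_of_eq (congrArg (· = (0 : ℝ)) (by ring))

section OneForm

def oneForm (f₁ f₂ : ℝ × ℝ → ℝ) (x : ℝ × ℝ) : ℝ × ℝ →L[ℝ] ℝ :=
  f₁ x • fst ℝ ℝ ℝ + f₂ x • snd ℝ ℝ ℝ

variable {f₁ f₂ : ℝ × ℝ → ℝ}

@[simp]
theorem oneForm_apply (x v : ℝ × ℝ) : oneForm f₁ f₂ x v = f₁ x * v.1 + f₂ x * v.2 := by
  simp [oneForm]

theorem ContDiffOn.oneForm {n : WithTop ℕ∞} {s : Set (ℝ × ℝ)} (h₁ : ContDiffOn ℝ n f₁ s)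
    (h₂ : ContDiffOn ℝ n f₂ s) : ContDiffOn ℝ n (oneForm f₁ f₂) s :=
  (h₁.smul contDiffOn_const).add (h₂.smul contDiffOn_const)

theorem ContinuousLinearMap.apply_eq_fst_mul_add_snd_mul (L : ℝ × ℝ →L[ℝ] ℝ) (u : ℝ × ℝ) :
    L u = u.1 * L (1, 0) + u.2 * L (0, 1) := by
  calc L u = L (u.1 • ((1 : ℝ), (0 : ℝ)) + u.2 • ((0 : ℝ), (1 : ℝ))) := by
        congr 1; ext <;> simp
    _ = u.1 * L (1, 0) + u.2 * L (0, 1) := by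
        rw [map_add, map_smul, map_smul, smul_eq_mul, smul_eq_mul]

theorem fderiv_oneForm_apply_comm {x : ℝ × ℝ} (h₁ : DifferentiableAt ℝ f₁ x)
    (h₂ : DifferentiableAt ℝ f₂ x) (hcurl : fderiv ℝ f₁ x (0, 1) = fderiv ℝ f₂ x (1, 0))
    (u v : ℝ × ℝ) :
    fderiv ℝ (oneForm f₁ f₂) x u v = fderiv ℝ (oneForm f₁ f₂) x v u := by
  have hd : fderiv ℝ (oneForm f₁ f₂) x =
      (fderiv ℝ f₁ x).smulRight (fst ℝ ℝ ℝ) + (fderiv ℝ f₂ x).smulRight (snd ℝ ℝ ℝ) :=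
    ((h₁.hasFDerivAt.smul_const _).add (h₂.hasFDerivAt.smul_const _)).fderiv
  simp only [hd, add_apply, smulRight_apply, smul_apply, coe_fst', coe_snd', smul_eq_mul]
  rw [apply_eq_fst_mul_add_snd_mul (fderiv ℝ f₁ x) u,
    apply_eq_fst_mul_add_snd_mul (fderiv ℝ f₁ x) v, apply_eq_fst_mul_add_snd_mul (fderiv ℝ f₂ x) u,
    apply_eq_fst_mul_add_snd_mul (fderiv ℝ f₂ x) v, hcurl]
  ring

end OneForm

theorem exists_potential_of_fderiv_fst_eq_zero_of_curl_eq_zero {I : Set ℝ} (hIopen : IsOpen I)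
    (hIconn : IsPreconnected I) {V : Set (ℝ × ℝ)} (hVopen : IsOpen V) (hVconv : Convex ℝ V)
    {F₁ F₂ : ℝ × (ℝ × ℝ) → ℝ} (hF₁ : ContDiffOn ℝ (⊤ : ℕ∞) F₁ (I ×ˢ V))
    (hF₂ : ContDiffOn ℝ (⊤ : ℕ∞) F₂ (I ×ˢ V))
    (hflat : ∀ p ∈ I ×ˢ V, fderiv ℝ F₁ p (1, 0, 0) = 0 ∧ fderiv ℝ F₂ p (1, 0, 0) = 0)
    (hcurl : ∀ p ∈ I ×ˢ V, fderiv ℝ F₁ p (0, 0, 1) = fderiv ℝ F₂ p (0, 1, 0)) :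
    ∃ ζ : ℝ × ℝ → ℝ, ContDiffOn ℝ (⊤ : ℕ∞) ζ V ∧
      ∀ p ∈ I ×ˢ V, F₁ p = fderiv ℝ ζ p.2 (1, 0) ∧ F₂ p = fderiv ℝ ζ p.2 (0, 1) := by
  rcases I.eq_empty_or_nonempty with rfl | ⟨w₀, hw₀⟩
  · exact ⟨0, contDiffOn_const, by simp⟩
  have hdiff {F : ℝ × (ℝ × ℝ) → ℝ} (hF : ContDiffOn ℝ (⊤ : ℕ∞) F (I ×ˢ V)) {p}
      (hp : p ∈ I ×ˢ V) : DifferentiableAt ℝ F p :=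
    (hF.differentiableOn (by simp)).differentiableAt ((hIopen.prod hVopen).mem_nhds hp)
  have hslice : ContDiff ℝ (⊤ : ℕ∞) fun x : ℝ × ℝ => (w₀, x) := contDiff_const.prodMk contDiff_id
  have hmaps : Set.MapsTo (fun x : ℝ × ℝ => (w₀, x)) V (I ×ˢ V) := fun x hx => ⟨hw₀, hx⟩
  have hf₁ := hF₁.comp hslice.contDiffOn hmaps
  have hf₂ := hF₂.comp hslice.contDiffOn hmaps
  have hclosed (x) (hx : x ∈ V) (u v) :
      fderiv ℝ (oneForm (F₁ ∘ (w₀, ·)) (F₂ ∘ (w₀, ·))) x u v =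
        fderiv ℝ (oneForm (F₁ ∘ (w₀, ·)) (F₂ ∘ (w₀, ·))) x v u := by
    refine fderiv_oneForm_apply_comm ((hf₁.differentiableOn (by simp)).differentiableAt
      (hVopen.mem_nhds hx)) ((hf₂.differentiableOn (by simp)).differentiableAt
      (hVopen.mem_nhds hx)) ?_ u v
    rw [Function.comp_def, Function.comp_def,
      (hdiff hF₁ (hmaps hx)).fderiv_comp_prodMk_right_apply,
      (hdiff hF₂ (hmaps hx)).fderiv_comp_prodMk_right_apply]
    exact hcurl _ (hmaps hx)
  obtain ⟨ζ, hζ, hdζ⟩ := hVconv.exists_contDiffOn_forall_hasFDerivAt_of_fderiv_symmetric hVopen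
    (hf₁.oneForm hf₂) (by simp) hclosed
  refine ⟨ζ, by simpa using hζ, ?_⟩
  rintro ⟨w, x⟩ ⟨hw, hx⟩
  have hconst {F : ℝ × (ℝ × ℝ) → ℝ} (hF : ContDiffOn ℝ (⊤ : ℕ∞) F (I ×ˢ V))
      (hFw : ∀ p ∈ I ×ˢ V, fderiv ℝ F p (1, 0, 0) = 0) : F (w, x) = F (w₀, x) :=
    hIopen.apply_prodMk_eq_of_fderiv_apply_one_zero_eq_zero hIconn
      (fun s hs => hdiff hF (Set.mk_mem_prod hs hx))
      (fun s hs => by simpa only [Prod.mk_zero_zero] using hFw _ (Set.mk_mem_prod hs hx)) hw hw₀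
  simp only [(hdζ x hx).fderiv, oneForm_apply, Function.comp_apply, mul_one, mul_zero, add_zero,
    zero_add]
  exact ⟨hconst hF₁ fun p hp => (hflat p hp).1, hconst hF₂ fun p hp => (hflat p hp).2⟩

theorem exists_potential_of_staticityConditions {I : Set ℝ} (hIopen : IsOpen I)
    (hIconn : IsPreconnected I) {V : Set (ℝ × ℝ)} (hVopen : IsOpen V) (hVconv : Convex ℝ V)
    {G H₁ H₂ : ℝ × (ℝ × ℝ) → ℝ} (hG : ContDiffOn ℝ (⊤ : ℕ∞) G (I ×ˢ V))
    (hH₁ : ContDiffOn ℝ (⊤ : ℕ∞) H₁ (I ×ˢ V)) (hH₂ : ContDiffOn ℝ (⊤ : ℕ∞) H₂ (I ×ˢ V))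
    (hGpos : ∀ p ∈ I ×ˢ V, 0 < G p) (hRW : ∀ p ∈ I ×ˢ V, StaticityConditions G H₁ H₂ p) :
    ∃ ζ : ℝ × ℝ → ℝ, ContDiffOn ℝ (⊤ : ℕ∞) ζ V ∧
      ∀ p ∈ I ×ˢ V, H₁ p = G p * fderiv ℝ ζ p.2 (1, 0) ∧ H₂ p = G p * fderiv ℝ ζ p.2 (0, 1) := by
  have hIV : IsOpen (I ×ˢ V) := hIopen.prod hVopen
  have hGne : ∀ p ∈ I ×ˢ V, G p ≠ 0 := fun p hp => (hGpos p hp).ne'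
  have hF₁ : ContDiffOn ℝ (⊤ : ℕ∞) (fun q => H₁ q / G q) (I ×ˢ V) := hH₁.div hG hGne
  have hF₂ : ContDiffOn ℝ (⊤ : ℕ∞) (fun q => H₂ q / G q) (I ×ˢ V) := hH₂.div hG hGne
  have hdiff {φ : ℝ × (ℝ × ℝ) → ℝ} (hφ : ContDiffOn ℝ (⊤ : ℕ∞) φ (I ×ˢ V)) {p}
      (hp : p ∈ I ×ˢ V) : DifferentiableAt ℝ φ p :=
    (hφ.differentiableOn (by simp)).differentiableAt (hIV.mem_nhds hp)
  have hmul {H : ℝ × (ℝ × ℝ) → ℝ} {p} (hp : p ∈ I ×ˢ V) :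
      H =ᶠ[𝓝 p] fun q => G q * (H q / G q) :=
    eventually_of_mem (hIV.mem_nhds hp) fun q hq => (mul_div_cancel₀ _ (hGne q hq)).symm
  have hquot (p) (hp : p ∈ I ×ˢ V) := by
    have h := (staticityConditions_iff_of_eventuallyEq_mul (hdiff hG hp) (hdiff hF₁ hp)
      (hdiff hF₂ hp) (hmul hp) (hmul hp)).1 (hRW p hp)
    simp only [mul_eq_zero, pow_eq_zero_iff two_ne_zero, hGne p hp, false_or, sub_eq_zero] at h
    exact h
  obtain ⟨ζ, hζ, hdζ⟩ := exists_potential_of_fderiv_fst_eq_zero_of_curl_eq_zero hIopen hIconn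
    hVopen hVconv hF₁ hF₂ (fun p hp => ⟨(hquot p hp).1, (hquot p hp).2.1⟩)
    (fun p hp => (hquot p hp).2.2.1.symm)
  refine ⟨ζ, hζ, fun p hp => ?_⟩
  rw [← (hdζ p hp).1, ← (hdζ p hp).2, mul_div_cancel₀ _ (hGne p hp), mul_div_cancel₀ _ (hGne p hp)]
  exact ⟨rfl, rfl⟩

theorem staticityConditions_of_potential {I : Set ℝ} (hIopen : IsOpen I) {V : Set (ℝ × ℝ)}
    (hVopen : IsOpen V) {G H₁ H₂ : ℝ × (ℝ × ℝ) → ℝ} (hG : ContDiffOn ℝ (⊤ : ℕ∞) G (I ×ˢ V))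
    {ζ : ℝ × ℝ → ℝ} (hζ : ContDiffOn ℝ (⊤ : ℕ∞) ζ V)
    (hH : ∀ p ∈ I ×ˢ V, H₁ p = G p * fderiv ℝ ζ p.2 (1, 0) ∧ H₂ p = G p * fderiv ℝ ζ p.2 (0, 1))
    {p : ℝ × (ℝ × ℝ)} (hp : p ∈ I ×ˢ V) : StaticityConditions G H₁ H₂ p := by
  have hIV : I ×ˢ V ∈ 𝓝 p := (hIopen.prod hVopen).mem_nhds hp
  have hζ₂ : ContDiffAt ℝ 2 ζ p.2 :=
    (hζ.contDiffAt (hVopen.mem_nhds hp.2)).of_le (WithTop.coe_le_coe.2 le_top)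
  have hdζ (u : ℝ × ℝ) : DifferentiableAt ℝ (fun y => fderiv ℝ ζ y u) p.2 :=
    ((hζ₂.fderiv_right (m := 1) (by norm_num)).differentiableAt one_ne_zero).clm_apply
      (differentiableAt_const u)
  have hGd : DifferentiableAt ℝ G p := (hG.differentiableOn (by simp)).differentiableAt hIV
  rw [staticityConditions_iff_of_eventuallyEq_mul (F₁ := fun q => fderiv ℝ ζ q.2 (1, 0))
    (F₂ := fun q => fderiv ℝ ζ q.2 (0, 1)) hGd
    ((hdζ _).comp p differentiableAt_snd) ((hdζ _).comp p differentiableAt_snd)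
    (eventually_of_mem hIV fun q hq => (hH q hq).1) (eventually_of_mem hIV fun q hq => (hH q hq).2),
    (hdζ _).fderiv_comp_snd_apply, (hdζ _).fderiv_comp_snd_apply,
    (hdζ _).fderiv_comp_snd_apply, (hdζ _).fderiv_comp_snd_apply,
    hζ₂.fderiv_fderiv_apply_comm (1, 0) (0, 1)]
  simp only [Prod.mk_zero_zero, map_zero, mul_zero, sub_self, and_self]

/-- The staticity conditions (RW1), (RW2), (RW3) hold on `I × V` (with `V`
open and convex, `G > 0`) if and only if `H_A = G·∂_A ζ` for a smooth
function `ζ` of the `x`-variables alone. -/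
theorem staticity_iff_potential (I : Set ℝ) (hIopen : IsOpen I)
    (hIconn : I.OrdConnected)
    (V : Set (ℝ × ℝ)) (hVopen : IsOpen V) (hVconv : Convex ℝ V)
    (G H₁ H₂ : ℝ × (ℝ × ℝ) → ℝ)
    (hG : ContDiffOn ℝ (⊤ : ℕ∞) G (I ×ˢ V))
    (hH₁ : ContDiffOn ℝ (⊤ : ℕ∞) H₁ (I ×ˢ V))
    (hH₂ : ContDiffOn ℝ (⊤ : ℕ∞) H₂ (I ×ˢ V))
    (hGpos : ∀ p ∈ I ×ˢ V, 0 < G p) :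
    (∀ p ∈ I ×ˢ V,
        (G p * fderiv ℝ H₁ p (1, 0, 0) - H₁ p * fderiv ℝ G p (1, 0, 0) = 0) ∧
        (G p * fderiv ℝ H₂ p (1, 0, 0) - H₂ p * fderiv ℝ G p (1, 0, 0) = 0) ∧
        (H₁ p * fderiv ℝ G p (0, 0, 1) - H₂ p * fderiv ℝ G p (0, 1, 0) +
          G p * (fderiv ℝ H₂ p (0, 1, 0) - fderiv ℝ H₁ p (0, 0, 1)) = 0) ∧
        (H₁ p * fderiv ℝ H₂ p (1, 0, 0) - H₂ p * fderiv ℝ H₁ p (1, 0, 0) = 0))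
      ↔
    (∃ ζ : ℝ × ℝ → ℝ, ContDiffOn ℝ (⊤ : ℕ∞) ζ V ∧
        ∀ p ∈ I ×ˢ V,
          H₁ p = G p * fderiv ℝ ζ p.2 (1, 0) ∧
          H₂ p = G p * fderiv ℝ ζ p.2 (0, 1)) := by
  change (∀ p ∈ I ×ˢ V, StaticityConditions G H₁ H₂ p) ↔ _
  exact ⟨exists_potential_of_staticityConditions hIopen hIconn.isPreconnected hVopen hVconv
      hG hH₁ hH₂ hGpos,
    fun ⟨ζ, hζ, hH⟩ _ hp => staticityConditions_of_potential hIopen hVopen hG hζ hH hp⟩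
end
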